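/- Choice Semantics: Let r = (k ~^c_R α ← B(r)) be a globally ground AC-rule with algebraic choice constraint head, standing for the two rules k ~_R α ← B(r) and X =_R α ← X =_R α^¬¬, B(r). Then for any σ-HT-interpretation (I^H, I^T): I_H ⊨_σ r if and only if (i) I_H ⊨_σ (k ~_R α ← B(r)) and (ii) I_H ⊨_σ (B_∧(r))^Σ implies ⟦(α)^Σ⟧_R(I_T) = ⟦(α)^Σ⟧_R(I_H). -/

import Mathlib

/-- The two worlds of HT logic. -/
inductive W : Type | H | T
deriving DecidableEq

/-- `W.le w w'` means `w' ≥ w` in the HT order (with `T ≥ H`). -/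
def W.le : W → W → Prop
  | .H, _ => True
  | .T, w' => w' = .T

/-- An HT-interpretation: a pair of sets of (variable-free) atoms with `h ⊆ t`. -/
structure HTI (A : Type*) where
  h : Set A
  t : Set A
  sub : h ⊆ t

/-- The component of a pointed HT-interpretation at world `w`. -/
def HTI.at {A : Type*} (I : HTI A) : W → Set A
  | .H => I.h
  | .T => I.t

mutual
/-- σ-formulas (with algebraic constraints) over domain `D`, ground atoms `A`,
    and a family of semirings `Rs i` (HOAS encoding of quantifiers). -/
inductive Fml (D A : Type) (ι : Type) (Rs : ι → Type) : Type 1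
  | bot
  | atom (a : A)
  | impl (φ ψ : Fml D A ι Rs)
  | or (φ ψ : Fml D A ι Rs)
  | and (φ ψ : Fml D A ι Rs)
  | ex (s : Set D) (b : D → Fml D A ι Rs)
  | all (s : Set D) (b : D → Fml D A ι Rs)
  /-- algebraic constraint `k ~_{Rs i} α`, where `cmp = (k ~ ·)` -/
  | constr (i : ι) (cmp : Rs i → Prop) (α : WFml D A ι Rs i)

/-- Weighted σ-formulas over the semiring `Rs i`. -/
inductive WFml (D A : Type) (ι : Type) (Rs : ι → Type) : ι → Type 1
  | const {i : ι} (k : Rs i) : WFml D A ι Rs i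
  | form {i : ι} (φ : Fml D A ι Rs) : WFml D A ι Rs i
  | wimpl {i : ι} (α β : WFml D A ι Rs i) : WFml D A ι Rs i
  | add {i : ι} (α β : WFml D A ι Rs i) : WFml D A ι Rs i
  | mul {i : ι} (α β : WFml D A ι Rs i) : WFml D A ι Rs i
  | neg {i : ι} (α : WFml D A ι Rs i) : WFml D A ι Rs i
  | inv {i : ι} (α : WFml D A ι Rs i) : WFml D A ι Rs i
  | sum {i : ι} (s : Set D) (b : D → WFml D A ι Rs i) : WFml D A ι Rs i
end

variable {D A : Type} {ι : Type} {Rs : ι → Type} [∀ i, Semiring (Rs i)]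

open Classical in
mutual
/-- HT satisfaction of σ-sentences (`nO`/`iO` interpret `-` and `⁻¹`). -/
noncomputable def Fml.sat (nO iO : ∀ i, Rs i → Rs i) (I : HTI A) : W → Fml D A ι Rs → Prop
  | _, .bot => False
  | w, .atom a => a ∈ I.at w
  | w, .impl φ ψ => ∀ w', W.le w w' → (Fml.sat nO iO I w' φ → Fml.sat nO iO I w' ψ)
  | w, .or φ ψ => Fml.sat nO iO I w φ ∨ Fml.sat nO iO I w ψ
  | w, .and φ ψ => Fml.sat nO iO I w φ ∧ Fml.sat nO iO I w ψ
  | w, .ex s b => ∃ ξ ∈ s, Fml.sat nO iO I w (b ξ)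
  | w, .all s b => ∀ ξ ∈ s, Fml.sat nO iO I w (b ξ)
  | w, .constr _ cmp α => ∀ w', W.le w w' → cmp (WFml.val nO iO I w' α)

/-- Value of a weighted σ-sentence over the semiring `Rs i`
    (`∑ᶠ` is `0` when the support is infinite, matching the junk case). -/
noncomputable def WFml.val (nO iO : ∀ i, Rs i → Rs i) (I : HTI A) :
    W → {i : ι} → WFml D A ι Rs i → Rs i
  | _, _, .const k => k
  | w, _, .form φ => if Fml.sat nO iO I w φ then 1 else 0
  | w, _, .wimpl α β =>
      if ∀ w', W.le w w' →
          (WFml.val nO iO I w' α = 0 ∨ WFml.val nO iO I w' β ≠ 0) then 1 else 0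
  | w, _, .add α β => WFml.val nO iO I w α + WFml.val nO iO I w β
  | w, _, .mul α β => WFml.val nO iO I w α * WFml.val nO iO I w β
  | w, _, .neg α => nO _ (WFml.val nO iO I w α)
  | w, _, .inv α => iO _ (WFml.val nO iO I w α)
  | w, _, .sum s b => ∑ᶠ ξ ∈ s, WFml.val nO iO I w (b ξ)
end

mutual
/-- `φ^¬¬`: prefix every atom of the σ-formula with `¬¬`. -/
noncomputable def Fml.dneg : Fml D A ι Rs → Fml D A ι Rs
  | .bot => .bot
  | .atom a => .impl (.impl (.atom a) .bot) .bot
  | .impl φ ψ => .impl φ.dneg ψ.dneg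
  | .or φ ψ => .or φ.dneg ψ.dneg
  | .and φ ψ => .and φ.dneg ψ.dneg
  | .ex s b => .ex s (fun ξ => (b ξ).dneg)
  | .all s b => .all s (fun ξ => (b ξ).dneg)
  | .constr i cmp α => .constr i cmp α.dneg

/-- `α^¬¬`: prefix every atom of the weighted σ-formula with `¬¬`. -/
noncomputable def WFml.dneg : {i : ι} → WFml D A ι Rs i → WFml D A ι Rs i
  | _, .const k => .const k
  | _, .form φ => .form φ.dneg
  | _, .wimpl α β => .wimpl α.dneg β.dneg
  | _, .add α β => .add α.dneg β.dneg
  | _, .mul α β => .mul α.dneg β.dneg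
  | _, .neg α => .neg α.dneg
  | _, .inv α => .inv α.dneg
  | _, .sum s b => .sum s (fun ξ => (b ξ).dneg)
end

/-! `α^¬¬` evaluates at every world as `α` does at `T`, because `¬¬p` holds at `H` iff `p` holds
at `T`. So the premise `X =_R α^¬¬` of the second rule pins `X` to `⟦α⟧(I_T)`, and that rule then
asks exactly for `⟦α⟧(I_H) = ⟦α⟧(I_T)` whenever the body holds at `H`; at `T` it is trivial. -/

namespace W

lemma le_T (w : W) : W.le w .T := by cases w <;> trivial

lemma forall_le_iff_of_const {w : W} {p : Prop} : (∀ w', W.le w w' → p) ↔ p :=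
  ⟨fun h => h .T (le_T w), fun h _ _ => h⟩

lemma forall_T_le_iff {q : W → Prop} : (∀ w', W.le .T w' → q w') ↔ q .T :=
  ⟨fun h => h .T rfl, fun h w' hw => by rwa [show w' = .T from hw]⟩

lemma forall_H_le_iff {q : W → Prop} : (∀ w', W.le .H w' → q w') ↔ q .H ∧ q .T :=
  ⟨fun h => ⟨h .H trivial, h .T trivial⟩, fun h w' _ => by cases w' <;> simp only [h]⟩

end W

lemma HTI.mem_t_of_mem_at (I : HTI A) {a : A} : ∀ {w : W}, a ∈ I.at w → a ∈ I.t
  | .H, ha => I.sub ha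
  | .T, ha => ha

section Satisfaction

variable (nO iO : ∀ i, Rs i → Rs i) (I : HTI A)

namespace Fml

lemma sat_impl_H {φ ψ : Fml D A ι Rs} :
    sat nO iO I .H (.impl φ ψ) ↔
      (sat nO iO I .H φ → sat nO iO I .H ψ) ∧ (sat nO iO I .T φ → sat nO iO I .T ψ) := by
  simp only [sat, W.forall_H_le_iff]

lemma sat_and {w : W} {φ ψ : Fml D A ι Rs} :
    sat nO iO I w (.and φ ψ) ↔ sat nO iO I w φ ∧ sat nO iO I w ψ :=
  Iff.rfl

lemma sat_constr_H {i : ι} {cmp : Rs i → Prop} {α : WFml D A ι Rs i} :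
    sat nO iO I .H (.constr i cmp α) ↔ cmp (α.val nO iO I .H) ∧ cmp (α.val nO iO I .T) := by
  simp only [sat, W.forall_H_le_iff]

lemma sat_constr_T {i : ι} {cmp : Rs i → Prop} {α : WFml D A ι Rs i} :
    sat nO iO I .T (.constr i cmp α) ↔ cmp (α.val nO iO I .T) := by
  simp only [sat, W.forall_T_le_iff]

lemma sat_dneg_atom (w : W) (a : A) :
    sat nO iO I w (dneg (.atom a : Fml D A ι Rs)) ↔ a ∈ I.t := by
  simp only [dneg, sat]
  exact ⟨fun h => by_contra fun ha => h .T (W.le_T w) fun _ _ h' => ha (I.mem_t_of_mem_at h'),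
    fun ha _ _ h => h .T (W.le_T _) ha⟩

end Fml

mutual

theorem Fml.sat_dneg : ∀ (φ : Fml D A ι Rs) (w : W),
    φ.dneg.sat nO iO I w ↔ φ.sat nO iO I .T
  | .bot, _ => Iff.rfl
  | .atom a, w => by simp only [Fml.sat_dneg_atom, Fml.sat, HTI.at]
  | .impl φ ψ, _ => by
      simp only [Fml.dneg, Fml.sat, Fml.sat_dneg φ, Fml.sat_dneg ψ,
        W.forall_le_iff_of_const, W.forall_T_le_iff]
  | .or φ ψ, w => or_congr (Fml.sat_dneg φ w) (Fml.sat_dneg ψ w)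
  | .and φ ψ, w => and_congr (Fml.sat_dneg φ w) (Fml.sat_dneg ψ w)
  | .ex s b, w => exists_congr fun ξ => and_congr_right fun _ => Fml.sat_dneg (b ξ) w
  | .all s b, w => forall_congr' fun ξ => imp_congr_right fun _ => Fml.sat_dneg (b ξ) w
  | .constr i cmp α, _ => by
      simp only [Fml.dneg, Fml.sat, WFml.val_dneg α,
        W.forall_le_iff_of_const, W.forall_T_le_iff]

theorem WFml.val_dneg : ∀ {i : ι} (α : WFml D A ι Rs i) (w : W),
    α.dneg.val nO iO I w = α.val nO iO I .T
  | _, .const _, _ => rfl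
  | _, .form φ, w => by
      simp only [WFml.dneg, WFml.val]
      congr 1
      exact propext (Fml.sat_dneg φ w)
  | _, .wimpl α β, _ => by
      simp only [WFml.dneg, WFml.val]
      congr 1
      simp only [WFml.val_dneg α, WFml.val_dneg β, W.forall_le_iff_of_const, W.forall_T_le_iff]
  | _, .add α β, w => by simp only [WFml.dneg, WFml.val, WFml.val_dneg α w, WFml.val_dneg β w]
  | _, .mul α β, w => by simp only [WFml.dneg, WFml.val, WFml.val_dneg α w, WFml.val_dneg β w]
  | _, .neg α, w => by simp only [WFml.dneg, WFml.val, WFml.val_dneg α w]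
  | _, .inv α, w => by simp only [WFml.dneg, WFml.val, WFml.val_dneg α w]
  | _, .sum s b, w =>
      finsum_congr fun ξ => finsum_congr fun _ => WFml.val_dneg (b ξ) w

end

lemma Fml.sat_constr_dneg {i : ι} {cmp : Rs i → Prop} {α : WFml D A ι Rs i} (w : W) :
    sat nO iO I w (.constr i cmp α.dneg) ↔ cmp (α.val nO iO I .T) :=
  (sat_dneg nO iO I (.constr i cmp α) w).trans (sat_constr_T nO iO I)

end Satisfaction

/-- **Choice Semantics**: for a globally ground `AC`-rule `r = k ∼^c_R α ← B(r)`,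
    which stands for the two rules `k ∼_R α ← B(r)` and `X =_R α ← X =_R α^¬¬, B(r)`
    (with `X` ranging over the carrier of `R`), and any σ-HT-interpretation
    `(I^H, I^T)`:  `I_H ⊨ r` iff (i) `I_H ⊨ (k ∼_R α ← B(r))` and (ii) `I_H ⊨ (B_∧(r))^Σ`
    implies `⟦α^Σ⟧_R(I_T) = ⟦α^Σ⟧_R(I_H)`.  Here `B` is the (Σ-closed) body sentence
    `(B_∧(r))^Σ`, `α` is the Σ-closed head weighted sentence `(α)^Σ`, and
    `cmp = (k ∼ ·)` interprets the comparison of the constraint. -/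
theorem choice_semantics (nO iO : ∀ i, Rs i → Rs i) (I : HTI A)
    (i0 : ι) (cmp : Rs i0 → Prop) (B : Fml D A ι Rs) (α : WFml D A ι Rs i0) :
    (Fml.sat nO iO I .H (.impl B (.constr i0 cmp α)) ∧
      ∀ x : Rs i0, Fml.sat nO iO I .H
        (.impl (.and (.constr i0 (· = x) α.dneg) B) (.constr i0 (· = x) α)))
    ↔ (Fml.sat nO iO I .H (.impl B (.constr i0 cmp α)) ∧
        (Fml.sat nO iO I .H B →
          WFml.val nO iO I .T α = WFml.val nO iO I .H α)) := by
  refine and_congr_right fun _ => ?_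
  simp only [Fml.sat_impl_H, Fml.sat_and, Fml.sat_constr_dneg, Fml.sat_constr_H, Fml.sat_constr_T]
  constructor
  · exact fun h hB => ((h _).1 ⟨rfl, hB⟩).1.symm
  · exact fun h x => ⟨fun ⟨hx, hB⟩ => ⟨(h hB).symm.trans hx, hx⟩, And.left⟩
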